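/- In the bit-gadget graph, dist(a^i, b^j) ≥ 3 for all i, j ∈ {0,…,k−1}; moreover, if k ≥ 4, then dist(a^i, b^i) = 5 for every i ∈ {0,…,k−1}. -/

import Mathlib

/-!
Grade the vertices by layers `a ↦ 0`, `F_A ∪ T_A ↦ 1`, `F_B ∪ T_B ↦ 2`, `b ↦ 3`. Every edge
joins consecutive layers, so a walk from `a^i` to `b^j` has odd length at least `3`. A walk of
length exactly `3` is `a^i — x_A^h — y_B^h — b^j` with `x ≠ y`, which forces `i_h ≠ j_h`; hence
`dist(a^i, b^i) ≥ 5`. Conversely, once there are two bits `h ≠ h'`, flipping bit `h` of `i`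
gives `j` with `dist(a^i, b^j) = 3` and `dist(b^j, b^i) = 2` through the shared bit `h'`.
-/

/-- Vertices of the bit-gadget graph: `a i`, `b i` for `i < k`, and the
bit-nodes `fA h`, `tA h`, `fB h`, `tB h` for `h < logk`. -/
inductive BGVertex (k logk : ℕ) where
  | a (i : Fin k)
  | b (i : Fin k)
  | fA (h : Fin logk)
  | tA (h : Fin logk)
  | fB (h : Fin logk)
  | tB (h : Fin logk)
deriving DecidableEq

/-- Base relation generating the edges of the bit-gadget graph:
`a i` is adjacent to `fA h` iff the `h`-th bit of `i` is `0`, to `tA h` iff it is `1`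
(so `a i` is adjacent exactly to `bin(a i)`); similarly for `b i`; and the cross
edges `(fA h, tB h)` and `(tA h, fB h)`. -/
def bgRel (k logk : ℕ) : BGVertex k logk → BGVertex k logk → Prop
  | .a i, .fA h => i.val.testBit h.val = false
  | .a i, .tA h => i.val.testBit h.val = true
  | .b i, .fB h => i.val.testBit h.val = false
  | .b i, .tB h => i.val.testBit h.val = true
  | .fA h, .tB h' => h = h'
  | .tA h, .fB h' => h = h'
  | _, _ => False

/-- The bit-gadget graph. -/
def bgGraph (k logk : ℕ) : SimpleGraph (BGVertex k logk) :=
  SimpleGraph.fromRel (bgRel k logk)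

namespace SimpleGraph

variable {V : Type*} {G : SimpleGraph V}

theorem Walk.exists_length_eq_sub_add_two_mul (f : V → ℤ)
    (hf : ∀ u v, G.Adj u v → f v = f u + 1 ∨ f v = f u - 1) {u v : V} (p : G.Walk u v) :
    ∃ m : ℕ, (p.length : ℤ) = f v - f u + 2 * m := by
  induction p with
  | nil => exact ⟨0, by simp⟩
  | @cons u w v huw q ih =>
    obtain ⟨m, hm⟩ := ih
    rw [Walk.length_cons, Nat.cast_succ]
    rcases hf u w huw with hw | hw
    · exact ⟨m, by omega⟩
    · exact ⟨m + 1, by push_cast; omega⟩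

theorem le_edist_of_forall_le_length {u v : V} {n : ℕ∞}
    (h : ∀ p : G.Walk u v, n ≤ p.length) :
    n ≤ G.edist u v :=
  le_sInf <| Set.forall_mem_range.2 h

end SimpleGraph

open SimpleGraph

namespace BGVertex

variable {k logk : ℕ}

def layer : BGVertex k logk → ℤ
  | a _ => 0
  | fA _ | tA _ => 1
  | fB _ | tB _ => 2
  | b _ => 3

def bitA (h : Fin logk) : Bool → BGVertex k logk
  | false => fA h
  | true => tA h

def bitB (h : Fin logk) : Bool → BGVertex k logk
  | false => fB h
  | true => tB h

end BGVertex

open BGVertex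

variable {k logk : ℕ}

theorem bgGraph_adj_layer {u v : BGVertex k logk} (huv : (bgGraph k logk).Adj u v) :
    v.layer = u.layer + 1 ∨ v.layer = u.layer - 1 := by
  rw [bgGraph, fromRel_adj] at huv
  obtain ⟨-, h | h⟩ := huv <;> cases u <;> cases v <;> simp_all [bgRel, layer]

theorem bgGraph_adj_a_bitA (i : Fin k) (h : Fin logk) :
    (bgGraph k logk).Adj (a i) (bitA h (i.val.testBit h)) := by
  cases hi : i.val.testBit h <;> simp [bgGraph, bgRel, bitA, hi]

theorem bgGraph_adj_bitA_bitB (h : Fin logk) (c : Bool) :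
    (bgGraph k logk).Adj (bitA h c) (bitB h !c) := by
  cases c <;> simp [bgGraph, bgRel, bitA, bitB]

theorem bgGraph_adj_bitB_b (j : Fin k) (h : Fin logk) :
    (bgGraph k logk).Adj (bitB h (j.val.testBit h)) (b j) := by
  cases hj : j.val.testBit h <;> simp [bgGraph, bgRel, bitB, hj]

theorem bgGraph_walk_a_b_length (i j : Fin k) (p : (bgGraph k logk).Walk (a i) (b j)) :
    ∃ m : ℕ, p.length = 3 + 2 * m := by
  obtain ⟨m, hm⟩ := p.exists_length_eq_sub_add_two_mul layer fun _ _ => bgGraph_adj_layer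
  exact ⟨m, by simp only [layer] at hm; omega⟩

theorem exists_testBit_ne_of_walk_length_eq_three {i j : Fin k}
    (p : (bgGraph k logk).Walk (a i) (b j)) (hp : p.length = 3) :
    ∃ h : Fin logk, i.val.testBit h ≠ j.val.testBit h := by
  obtain _ | ⟨h₁, _ | ⟨h₂, _ | ⟨h₃, _ | ⟨_, _⟩⟩⟩⟩ := p <;>
    simp only [Walk.length_cons, Walk.length_nil] at hp <;> try omega
  rename_i x y
  simp only [bgGraph, fromRel_adj] at h₁ h₂ h₃
  cases x <;> cases y <;> simp_all [bgRel] <;> exact ⟨_, by rw [h₁, h₃]; decide⟩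

theorem three_le_bgGraph_edist_a_b (i j : Fin k) :
    3 ≤ (bgGraph k logk).edist (a i) (b j) :=
  le_edist_of_forall_le_length fun p => by
    obtain ⟨m, hm⟩ := bgGraph_walk_a_b_length i j p
    exact_mod_cast (show 3 ≤ p.length by omega)

theorem five_le_bgGraph_edist_a_b_self (i : Fin k) :
    5 ≤ (bgGraph k logk).edist (a i) (b i) :=
  le_edist_of_forall_le_length fun p => by
    obtain ⟨m, hm⟩ := bgGraph_walk_a_b_length i i p
    have hp3 : p.length ≠ 3 := fun hp =>
      (exists_testBit_ne_of_walk_length_eq_three p hp).elim fun _ hne => hne rfl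
    exact_mod_cast (show 5 ≤ p.length by omega)

theorem bgGraph_edist_a_b_le_three {i j : Fin k} {h : Fin logk}
    (hij : i.val.testBit h ≠ j.val.testBit h) :
    (bgGraph k logk).edist (a i) (b j) ≤ 3 := by
  have := bgGraph_adj_bitB_b j h
  rw [← Bool.not_eq_iff.2 hij] at this
  exact edist_le (.cons (bgGraph_adj_a_bitA i h) <| .cons (bgGraph_adj_bitA_bitB h _) <|
      .cons this .nil)

theorem bgGraph_edist_b_b_le_two {i j : Fin k} {h : Fin logk}
    (hij : i.val.testBit h = j.val.testBit h) :
    (bgGraph k logk).edist (b i) (b j) ≤ 2 := by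
  have := bgGraph_adj_bitB_b i h
  rw [hij] at this
  exact edist_le (.cons this.symm <| .cons (bgGraph_adj_bitB_b j h) .nil)

theorem exists_testBit_ne_testBit_eq (hpow : k = 2 ^ logk) (i : Fin k) {h h' : Fin logk}
    (hh' : h ≠ h') :
    ∃ j : Fin k, i.val.testBit h ≠ j.val.testBit h ∧ i.val.testBit h' = j.val.testBit h' := by
  subst hpow
  have hlt : i.val ^^^ 2 ^ h.val < 2 ^ logk :=
    Nat.xor_lt_two_pow i.isLt (Nat.pow_lt_pow_right (by norm_num) h.isLt)
  refine ⟨⟨_, hlt⟩, ?_, ?_⟩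
  · simp [Nat.testBit_xor]
  · simp [Nat.testBit_xor, Fin.val_ne_of_ne hh']

theorem bitGadget_dist_a_b_ge_three_and_eq_five_general (k logk : ℕ)
    (hpow : k = 2 ^ logk) :
    (∀ i j : Fin k, 3 ≤ (bgGraph k logk).edist (BGVertex.a i) (BGVertex.b j)) ∧
    (4 ≤ k → ∀ i : Fin k,
      (bgGraph k logk).edist (BGVertex.a i) (BGVertex.b i) = 5) := by
  refine ⟨three_le_bgGraph_edist_a_b, fun hk i => ?_⟩
  have hlog : 2 ≤ logk :=
    (Nat.pow_le_pow_iff_right (by norm_num)).1 (hpow ▸ hk : 2 ^ 2 ≤ 2 ^ logk)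
  obtain ⟨j, hj0, hj1⟩ := exists_testBit_ne_testBit_eq hpow i
    (show (⟨0, by omega⟩ : Fin logk) ≠ ⟨1, by omega⟩ by simp)
  refine le_antisymm ?_ (five_le_bgGraph_edist_a_b_self i)
  calc (bgGraph k logk).edist (a i) (b i)
      ≤ (bgGraph k logk).edist (a i) (b j) + (bgGraph k logk).edist (b j) (b i) :=
        SimpleGraph.edist_triangle
    _ ≤ 3 + 2 :=
        add_le_add (bgGraph_edist_a_b_le_three hj0) (bgGraph_edist_b_b_le_two hj1.symm)
    _ = 5 := by norm_num

/-- in the bit-gadget graph (for `k = 2 ^ logk`, `k ≥ 2`),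
`dist(a i, b j) ≥ 3` for all `i, j`; moreover if `k ≥ 4` then `dist(a i, b i) = 5`
for every `i`.  Distances are taken in `ℕ∞` (`∞` when there is no path). -/
theorem bitGadget_dist_a_b_ge_three_and_eq_five (k logk : ℕ) (hk : 2 ≤ k)
    (hpow : k = 2 ^ logk) :
    (∀ i j : Fin k, 3 ≤ (bgGraph k logk).edist (BGVertex.a i) (BGVertex.b j)) ∧
    (4 ≤ k → ∀ i : Fin k,
      (bgGraph k logk).edist (BGVertex.a i) (BGVertex.b i) = 5) :=
  bitGadget_dist_a_b_ge_three_and_eq_five_general k logk hpow
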